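/- There is a bijective correspondence between the set Pict((λ⁺)′/μ′, ν/ω) of pictures f : (λ⁺)′/μ′ → ν/ω and the set M((λ⁺)′/μ′, ν/ω) of marked tableaux. Under this correspondence, the marked tableau T⁺ corresponding to f has entry m+i at a cell x exactly when f(x) lies in row i of [ν/ω] (i.e. T⁺ is the row reading of f with entries shifted by m), and conversely f is the repositioning bijection Rpos : [(λ⁺)′/μ′] → [ν/ω] associated with T⁺, which sends the cell of the j-th occurrence of the symbol m+i in w(T⁺) to the cell (i, ωᵢ + j). -/

import Mathlib

noncomputable section

/-- A partition, written 1-based: `α i` is the length of row `i` for `i ≥ 1`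
(we normalize `α 0 = 0`); it is weakly decreasing and eventually zero. -/
def IsPartition (α : ℕ → ℕ) : Prop :=
  α 0 = 0 ∧ (∀ i j, 1 ≤ i → i ≤ j → α j ≤ α i) ∧ ∃ N, ∀ i, N ≤ i → α i = 0

/-- The set of cells of the skew diagram `α/β` (rows and columns 1-based):
`(i,j)` with `β i < j ≤ α i`. -/
def cellOf (α β : ℕ → ℕ) : Set (ℕ × ℕ) := {p | β p.1 < p.2 ∧ p.2 ≤ α p.1}

/-- The conjugate partition (1-based): `(conjP α) j = #{i ≥ 1 | α i ≥ j}` for `j ≥ 1`. -/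
def conjP (α : ℕ → ℕ) (j : ℕ) : ℕ := Set.ncard {i : ℕ | 1 ≤ i ∧ 1 ≤ j ∧ j ≤ α i}

/-- Semistandard skew tableau: entries weakly increase along rows (left to right) and
strictly increase down columns. -/
def IsSSkew (α β : ℕ → ℕ) (T : ℕ × ℕ → ℕ) : Prop :=
  (∀ i j j', (i, j) ∈ cellOf α β → (i, j') ∈ cellOf α β → j ≤ j' → T (i, j) ≤ T (i, j')) ∧
  (∀ i i' j, (i, j) ∈ cellOf α β → (i', j) ∈ cellOf α β → i < i' → T (i, j) < T (i', j))

/-- Anti-semistandard skew tableau: entries strictly decrease along rows (left to right)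
and weakly decrease down columns. -/
def IsAntiSSkew (α β : ℕ → ℕ) (T : ℕ × ℕ → ℕ) : Prop :=
  (∀ i j j', (i, j) ∈ cellOf α β → (i, j') ∈ cellOf α β → j < j' → T (i, j') < T (i, j)) ∧
  (∀ i i' j, (i, j) ∈ cellOf α β → (i', j) ∈ cellOf α β → i ≤ i' → T (i', j) ≤ T (i, j))

/-- `wle p q` : cell `p` comes weakly before cell `q` in the reading order of the reading
word (rows top to bottom, inside each row right to left). -/
def wle (p q : ℕ × ℕ) : Prop := p.1 < q.1 ∨ (p.1 = q.1 ∧ q.2 ≤ p.2)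

/-- Number of occurrences of the symbol `v` among the cells weakly before `x` in the
reading word of `T` (so "the `j`-th occurrence of `v` in `w(T)` is at the cell `x`" reads
`x ∈ cellOf α β ∧ T x = v ∧ occBefore α β T v x = j`). -/
def occBefore (α β : ℕ → ℕ) (T : ℕ × ℕ → ℕ) (v : ℕ) (x : ℕ × ℕ) : ℕ :=
  Set.ncard {p | p ∈ cellOf α β ∧ wle p x ∧ T p = v}

/-- Total number of occurrences of the symbol `v` in the skew tableau `T`. -/
def occCount (α β : ℕ → ℕ) (T : ℕ × ℕ → ℕ) (v : ℕ) : ℕ :=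
  Set.ncard {p | p ∈ cellOf α β ∧ T p = v}

/-- The reading word of `T` is a lattice word for the symbols `base, base+1, …` :
in every initial segment, `v+1` occurs at most as often as `v`, for every `v ≥ base`. -/
def IsLatticeFrom (α β : ℕ → ℕ) (T : ℕ × ℕ → ℕ) (base : ℕ) : Prop :=
  ∀ x ∈ cellOf α β, ∀ v, base ≤ v → occBefore α β T (v + 1) x ≤ occBefore α β T v x

/-- `T` (with symbols `m+1, m+2, …`) is shifted Yamanouchi with respect to the shift `ω`:
for every initial segment `w′` of the reading word and every `i ≥ 1`,
`ω i + a_i(w′) ≥ ω (i+1) + a_{i+1}(w′)`. -/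
def ShiftedYam (α β : ℕ → ℕ) (m : ℕ) (ω : ℕ → ℕ) (T : ℕ × ℕ → ℕ) : Prop :=
  ∀ x ∈ cellOf α β, ∀ i, 1 ≤ i →
    ω (i + 1) + occBefore α β T (m + i + 1) x ≤ ω i + occBefore α β T (m + i) x

/-- `Tm = Rp(Tp)` : if the `j`-th occurrence of the symbol `m+i` in the reading word of
`Tp` lies in column `c` of `Tp`, then the entry of `Tm` at the cell `(i, ω i + j)` is `c`. -/
def IsRp (α β : ℕ → ℕ) (m : ℕ) (ω : ℕ → ℕ) (Tp Tm : ℕ × ℕ → ℕ) : Prop :=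
  ∀ x ∈ cellOf α β, ∀ i, 1 ≤ i → Tp x = m + i →
    Tm (i, ω i + occBefore α β Tp (m + i) x) = x.2

/-- `λ⁺` : the first `m` rows of `λ`. -/
def lamPlus (m : ℕ) (la : ℕ → ℕ) : ℕ → ℕ := fun i => if i ≤ m then la i else 0

/-- `λ⁻` : the conjugate of the partition `(λ_{m+1}, λ_{m+2}, …)`. -/
def lamMinus (m : ℕ) (la : ℕ → ℕ) : ℕ → ℕ :=
  conjP (fun i => if 1 ≤ i then la (m + i) else 0)

/-- `p ≤_NW q`. -/
def leNW (p q : ℕ × ℕ) : Prop := p.1 ≤ q.1 ∧ p.2 ≤ q.2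

/-- `p ≤_SW q`. -/
def leSW (p q : ℕ × ℕ) : Prop := p.1 ≤ q.1 ∧ q.2 ≤ p.2

/-- A picture `f : α/β → γ/δ` : a bijection of the cell sets such that
`x ≤_NW y → f x ≤_SW f y` and `f x ≤_NW f y → x ≤_SW y`. -/
def IsPicture (α β γ δ : ℕ → ℕ) (f : ℕ × ℕ → ℕ × ℕ) : Prop :=
  Set.BijOn f (cellOf α β) (cellOf γ δ) ∧
    (∀ p ∈ cellOf α β, ∀ q ∈ cellOf α β, leNW p q → leSW (f p) (f q)) ∧
    (∀ p ∈ cellOf α β, ∀ q ∈ cellOf α β, leNW (f p) (f q) → leSW p q)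

/-- The repositioning map `Rpos` associated with a tableau `Tp` (symbols `m+1,…`):
the cell of the `j`-th occurrence of `m+i` in `w(Tp)` is sent to `(i, ω i + j)`. -/
def RposFun (α β : ℕ → ℕ) (m : ℕ) (ω : ℕ → ℕ) (Tp : ℕ × ℕ → ℕ) : ℕ × ℕ → ℕ × ℕ :=
  fun p => (Tp p - m, ω (Tp p - m) + occBefore α β Tp (Tp p) p)

/-!
Inside a row of `ν/ω`, the picture conditions force a picture `f` to fill the cells from left to
right in the reading order of its source, so `f` is the repositioning map of its row reading
`T = m + row ∘ f`, and `Rp(T) = column ∘ f⁻¹`. The two picture conditions then read as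
semistandardness of `T` and anti-semistandardness of `Rp(T)`. Conversely, for a marked `T` the map
`Rpos(T)` is a bijection filling rows in reading order, and the convexity of skew diagrams turns
the two (anti-)semistandard conditions back into the picture conditions.
-/

open Set

namespace wle

lemma refl (p : ℕ × ℕ) : wle p p := Or.inr ⟨rfl, le_rfl⟩

lemma trans {p q r : ℕ × ℕ} (h₁ : wle p q) (h₂ : wle q r) : wle p r := by
  unfold wle at *; omega

lemma total (p q : ℕ × ℕ) : wle p q ∨ wle q p := by
  unfold wle; omega

lemma antisymm {p q : ℕ × ℕ} (h₁ : wle p q) (h₂ : wle q p) : p = q := by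
  unfold wle at *; ext <;> omega

lemma fst_le {p q : ℕ × ℕ} (h : wle p q) : p.1 ≤ q.1 := by
  unfold wle at h; omega

end wle

section Occurrences

variable {α β : ℕ → ℕ} {T : ℕ × ℕ → ℕ} {v : ℕ} {x y : ℕ × ℕ}

lemma occBefore_const_add (m : ℕ) :
    occBefore α β (fun q => m + T q) (m + v) x = occBefore α β T v x := by
  simp [occBefore]

lemma occCount_const_add (m : ℕ) :
    occCount α β (fun q => m + T q) (m + v) = occCount α β T v := by
  simp [occCount]

lemma occBefore_mono (hfin : (cellOf α β).Finite) (h : wle x y) :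
    occBefore α β T v x ≤ occBefore α β T v y :=
  ncard_le_ncard (fun _ hp => ⟨hp.1, hp.2.1.trans h, hp.2.2⟩) (hfin.subset fun _ hp => hp.1)

lemma occBefore_lt (hfin : (cellOf α β).Finite) (hy : y ∈ cellOf α β) (hTy : T y = v)
    (h : wle x y) (hne : x ≠ y) : occBefore α β T v x < occBefore α β T v y := by
  refine ncard_lt_ncard ⟨fun _ hp => ⟨hp.1, hp.2.1.trans h, hp.2.2⟩, fun hsub => ?_⟩
    (hfin.subset fun _ hp => hp.1)
  exact hne (h.antisymm (hsub ⟨hy, wle.refl y, hTy⟩).2.1)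

lemma one_le_occBefore (hfin : (cellOf α β).Finite) (hx : x ∈ cellOf α β) (hTx : T x = v) :
    1 ≤ occBefore α β T v x :=
  (ncard_pos (hfin.subset fun _ hp => hp.1)).2 ⟨x, hx, wle.refl x, hTx⟩

lemma occBefore_le_occCount (hfin : (cellOf α β).Finite) :
    occBefore α β T v x ≤ occCount α β T v :=
  ncard_le_ncard (fun _ hp => ⟨hp.1, hp.2.2⟩) (hfin.subset fun _ hp => hp.1)

lemma exists_occBefore_eq (hfin : (cellOf α β).Finite) {k : ℕ} (hk₁ : 1 ≤ k)
    (hk : k ≤ occCount α β T v) : ∃ x ∈ cellOf α β, T x = v ∧ occBefore α β T v x = k := by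
  have hinj (x y : ℕ × ℕ) (hx : x ∈ {p | p ∈ cellOf α β ∧ T p = v})
      (hy : y ∈ {p | p ∈ cellOf α β ∧ T p = v})
      (hxy : occBefore α β T v x = occBefore α β T v y) : x = y := by
    by_contra hne
    rcases wle.total x y with h | h
    · exact (occBefore_lt hfin hy.1 hy.2 h hne).ne hxy
    · exact (occBefore_lt hfin hx.1 hx.2 h (Ne.symm hne)).ne' hxy
  obtain ⟨x, hx, hxk⟩ := surj_on_of_inj_on_of_ncard_le (t := Icc 1 (occCount α β T v))
    (fun x _ => occBefore α β T v x)
    (fun x hx => ⟨one_le_occBefore hfin hx.1 hx.2, occBefore_le_occCount hfin⟩) hinj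
    (by simp [occCount]) (finite_Icc _ _) k ⟨hk₁, hk⟩
  exact ⟨x, hx.1, hx.2, hxk.symm⟩

end Occurrences

section Shapes

variable {α β : ℕ → ℕ} {p q : ℕ × ℕ}

lemma one_le_fst_of_mem_cellOf (hα : α 0 = 0) (hp : p ∈ cellOf α β) : 1 ≤ p.1 := by
  by_contra h
  have hp1 : p.1 = 0 := by omega
  have := hp.2
  rw [hp1, hα] at this
  exact absurd hp.1 (by omega)

lemma swCorner_mem_cellOf (hβ : AntitoneOn β (Ici 1)) (hp₁ : 1 ≤ p.1) (hp : p ∈ cellOf α β)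
    (hq : q ∈ cellOf α β) (h : leNW p q) : (q.1, p.2) ∈ cellOf α β := by
  have := hβ (mem_Ici.2 hp₁) (mem_Ici.2 (hp₁.trans h.1)) h.1
  exact ⟨show β q.1 < p.2 by have := hp.1; omega, h.2.trans hq.2⟩

lemma neCorner_mem_cellOf (hα : AntitoneOn α (Ici 1)) (hp₁ : 1 ≤ p.1) (hp : p ∈ cellOf α β)
    (hq : q ∈ cellOf α β) (h : leNW p q) : (p.1, q.2) ∈ cellOf α β := by
  have := hα (mem_Ici.2 hp₁) (mem_Ici.2 (hp₁.trans h.1)) h.1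
  exact ⟨hp.1.trans_le h.2, hq.2.trans this⟩

end Shapes

namespace IsPartition

variable {α : ℕ → ℕ}

lemma antitoneOn (h : IsPartition α) : AntitoneOn α (Ici 1) :=
  fun i hi j _ hij => h.2.1 i j hi hij

lemma le_one (h : IsPartition α) (i : ℕ) : α i ≤ α 1 := by
  rcases Nat.eq_zero_or_pos i with rfl | hi
  · simp [h.1]
  · exact h.2.1 1 i le_rfl hi

lemma finite_cellOf (h : IsPartition α) (β : ℕ → ℕ) : (cellOf α β).Finite := by
  obtain ⟨N, hN⟩ := h.2.2
  refine ((finite_Iio N).prod (finite_Iic (α 1))).subset fun p hp => ⟨?_, hp.2.trans (h.le_one _)⟩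
  by_contra hpN
  have := hN p.1 (not_lt.1 hpN)
  exact absurd hp (by simp [cellOf, this]; omega)

lemma conjP (h : IsPartition α) : IsPartition (conjP α) := by
  obtain ⟨N, hN⟩ := h.2.2
  refine ⟨by simp [_root_.conjP], fun j j' hj hjj' => ?_, α 1 + 1, fun j hj => ?_⟩
  · refine ncard_le_ncard (fun i hi => ⟨hi.1, hj, hjj'.trans hi.2.2⟩)
      ((finite_Iio N).subset fun i hi => ?_)
    by_contra hiN
    have := hN i (not_lt.1 hiN)
    have := hi.2.2
    omega
  · have hempty : {i | 1 ≤ i ∧ 1 ≤ j ∧ j ≤ α i} = ∅ := by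
      ext i
      simp only [mem_ofPred_eq, mem_empty_iff_false, iff_false, not_and, not_le]
      intro hi _
      have := h.2.1 1 i le_rfl hi
      omega
    simp [_root_.conjP, hempty]

lemma lamPlus (h : IsPartition α) (m : ℕ) : IsPartition (lamPlus m α) := by
  refine ⟨by simp [_root_.lamPlus, h.1], fun i j hi hij => ?_, m + 1, fun i hi => ?_⟩ <;>
    simp only [_root_.lamPlus]
  · split_ifs <;> first | omega | exact h.2.1 i j hi hij
  · exact if_neg (by omega)

lemma lamMinus (h : IsPartition α) (m : ℕ) : IsPartition (lamMinus m α) := by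
  obtain ⟨N, hN⟩ := h.2.2
  refine IsPartition.conjP ⟨by simp, fun i j hi hij => ?_, N, fun i hi => ?_⟩ <;> simp only
  · rw [if_pos hi, if_pos (hi.trans hij)]
    exact h.2.1 _ _ (by omega) (by omega)
  · split_ifs
    · exact hN _ (by omega)
    · rfl

end IsPartition

section Semistandard

variable {α β : ℕ → ℕ} {T : ℕ × ℕ → ℕ} {p q : ℕ × ℕ}

lemma IsSSkew.le_of_leNW (hT : IsSSkew α β T) (hα : α 0 = 0) (hβ : AntitoneOn β (Ici 1))
    (hp : p ∈ cellOf α β) (hq : q ∈ cellOf α β) (h : leNW p q) : T p ≤ T q := by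
  have hc := swCorner_mem_cellOf hβ (one_le_fst_of_mem_cellOf hα hp) hp hq h
  rcases h.1.lt_or_eq with h₁ | h₁
  · exact (hT.2 _ _ _ hp hc h₁).le.trans (hT.1 _ _ _ hc hq h.2)
  · have hp' : p = (q.1, p.2) := Prod.ext h₁ rfl
    rw [hp']
    exact hT.1 _ _ _ hc hq h.2

lemma IsSSkew.lt_of_fst_lt (hT : IsSSkew α β T) (hα : α 0 = 0) (hβ : AntitoneOn β (Ici 1))
    (hp : p ∈ cellOf α β) (hq : q ∈ cellOf α β) (h₁ : p.1 < q.1) (h₂ : p.2 ≤ q.2) :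
    T p < T q := by
  have hc := swCorner_mem_cellOf hβ (one_le_fst_of_mem_cellOf hα hp) hp hq ⟨h₁.le, h₂⟩
  exact (hT.2 _ _ _ hp hc h₁).trans_le (hT.1 _ _ _ hc hq h₂)

end Semistandard

def FillsRowsInReadingOrder (α β : ℕ → ℕ) (f : ℕ × ℕ → ℕ × ℕ) : Prop :=
  ∀ p ∈ cellOf α β, ∀ q ∈ cellOf α β, (f p).1 = (f q).1 → wle p q → (f p).2 ≤ (f q).2

section Pictures

variable {α β γ δ : ℕ → ℕ} {f : ℕ × ℕ → ℕ × ℕ} {p q : ℕ × ℕ}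

lemma FillsRowsInReadingOrder.wle_iff (hfill : FillsRowsInReadingOrder α β f)
    (hinj : InjOn f (cellOf α β)) (hp : p ∈ cellOf α β) (hq : q ∈ cellOf α β)
    (hrow : (f p).1 = (f q).1) : wle p q ↔ (f p).2 ≤ (f q).2 := by
  refine ⟨hfill p hp q hq hrow, fun hcol => ?_⟩
  rcases wle.total p q with h | h
  · exact h
  · have hqp : f q = f p := Prod.ext hrow.symm ((hfill q hq p hp hrow.symm h).antisymm hcol)
    rw [hinj hq hp hqp]
    exact wle.refl p

lemma ncard_setOf_fst_eq_snd_le (hf : BijOn f (cellOf α β) (cellOf γ δ)) {i c : ℕ} (hc : c ≤ γ i) :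
    {q | q ∈ cellOf α β ∧ (f q).1 = i ∧ (f q).2 ≤ c}.ncard = c - δ i := by
  rw [← ncard_Ioc_nat]
  refine BijOn.ncard_eq (f := fun q => (f q).2)
    ⟨fun q hq => ?_, fun q hq q' hq' hqq' => ?_, fun c' hc' => ?_⟩
  · have hfq := hf.1 hq.1
    rw [← hq.2.1]
    exact ⟨hfq.1, hq.2.2⟩
  · exact hf.2.1 hq.1 hq'.1 (Prod.ext (hq.2.1.trans hq'.2.1.symm) hqq')
  · obtain ⟨q, hq, hfq⟩ := hf.2.2 (show (i, c') ∈ cellOf γ δ from ⟨hc'.1, hc'.2.trans hc⟩)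
    exact ⟨q, ⟨hq, by rw [hfq], by rw [hfq]; exact hc'.2⟩, by simp only [hfq]⟩

lemma occCount_fst (hf : BijOn f (cellOf α β) (cellOf γ δ)) (i : ℕ) :
    occCount α β (fun q => (f q).1) i = γ i - δ i := by
  rw [← ncard_setOf_fst_eq_snd_le hf le_rfl, occCount]
  congr 1
  ext q
  refine ⟨fun hq => ⟨hq.1, hq.2, ?_⟩, fun hq => ⟨hq.1, hq.2.1⟩⟩
  have := (hf.1 hq.1).2
  rwa [hq.2] at this

lemma FillsRowsInReadingOrder.occBefore_fst (hfill : FillsRowsInReadingOrder α β f)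
    (hf : BijOn f (cellOf α β) (cellOf γ δ)) (hp : p ∈ cellOf α β) :
    occBefore α β (fun q => (f q).1) (f p).1 p = (f p).2 - δ (f p).1 := by
  rw [← ncard_setOf_fst_eq_snd_le hf (hf.1 hp).2, occBefore]
  congr 1
  ext q
  refine ⟨fun hq => ⟨hq.1, hq.2.2, ?_⟩, fun hq => ⟨hq.1, ?_, hq.2.1⟩⟩
  · exact (hfill.wle_iff hf.2.1 hq.1 hp hq.2.2).1 hq.2.1
  · exact (hfill.wle_iff hf.2.1 hq.1 hp hq.2.1).2 hq.2.2

lemma FillsRowsInReadingOrder.eq_rposFun (hfill : FillsRowsInReadingOrder α β f)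
    (hf : BijOn f (cellOf α β) (cellOf γ δ)) (m : ℕ) (hp : p ∈ cellOf α β) :
    f p = RposFun α β m δ (fun q => m + (f q).1) p := by
  have hδ := (hf.1 hp).1
  simp only [RposFun, Nat.add_sub_cancel_left, occBefore_const_add, hfill.occBefore_fst hf hp]
  ext <;> simp only
  omega

lemma IsPicture.fillsRowsInReadingOrder (hf : IsPicture α β γ δ f) :
    FillsRowsInReadingOrder α β f := by
  intro p hp q hq hrow hpq
  rcases hpq with h | ⟨h₁, h₂⟩
  · by_contra hcol
    exact absurd (hf.2.2 q hq p hp ⟨hrow.ge, (not_le.1 hcol).le⟩).1 (not_le.2 h)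
  · exact (hf.2.1 q hq p hp ⟨h₁.ge, h₂⟩).2

lemma IsPicture.isSSkew (hf : IsPicture α β γ δ f) (m : ℕ) :
    IsSSkew α β (fun q => m + (f q).1) := by
  refine ⟨fun i j j' hj hj' hjj' => ?_, fun i i' j hi hi' hii' => ?_⟩
  · simpa using (hf.2.1 _ hj _ hj' ⟨le_rfl, hjj'⟩).1
  · obtain ⟨hrow, hcol⟩ := hf.2.1 _ hi _ hi' ⟨hii'.le, le_rfl⟩
    simp only [add_lt_add_iff_left]
    refine hrow.lt_of_ne fun hrow' => hii'.ne ?_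
    have hcol' := hf.fillsRowsInReadingOrder _ hi _ hi' hrow' (Or.inl hii')
    exact congrArg Prod.fst (hf.1.2.1 hi hi' (Prod.ext hrow' (hcol'.antisymm hcol)))

lemma IsPicture.isAntiSSkew (hf : IsPicture α β γ δ f) {Tm : ℕ × ℕ → ℕ}
    (hTm : ∀ p ∈ cellOf α β, Tm (f p) = p.2) : IsAntiSSkew γ δ Tm := by
  refine ⟨fun i j j' hj hj' hjj' => ?_, fun i i' j hi hi' hii' => ?_⟩
  · obtain ⟨x, hx, hfx⟩ := hf.1.2.2 hj
    obtain ⟨x', hx', hfx'⟩ := hf.1.2.2 hj'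
    rw [← hfx, ← hfx', hTm x hx, hTm x' hx']
    have hsw := hf.2.2 x hx x' hx' (by rw [hfx, hfx']; exact ⟨le_rfl, hjj'.le⟩)
    refine hsw.2.lt_of_ne fun hcol => ?_
    have := (hf.2.1 x hx x' hx' ⟨hsw.1, hcol.ge⟩).2
    rw [hfx, hfx'] at this
    exact absurd this (not_le.2 hjj')
  · obtain ⟨x, hx, hfx⟩ := hf.1.2.2 hi
    obtain ⟨x', hx', hfx'⟩ := hf.1.2.2 hi'
    rw [← hfx, ← hfx', hTm x hx, hTm x' hx']
    exact (hf.2.2 x hx x' hx' (by rw [hfx, hfx']; exact ⟨hii', le_rfl⟩)).2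

end Pictures

section PicturesOfMarked

variable {α β γ δ : ℕ → ℕ} {f : ℕ × ℕ → ℕ × ℕ} {Tm : ℕ × ℕ → ℕ} {p q : ℕ × ℕ}

lemma leSW_image_of_leNW (hf : BijOn f (cellOf α β) (cellOf γ δ)) (hγ₀ : γ 0 = 0)
    (hγ : AntitoneOn γ (Ici 1))
    (hmono : ∀ p ∈ cellOf α β, ∀ q ∈ cellOf α β, leNW p q → (f p).1 ≤ (f q).1)
    (hTm : ∀ p ∈ cellOf α β, Tm (f p) = p.2) (hanti : IsAntiSSkew γ δ Tm)
    (hp : p ∈ cellOf α β) (hq : q ∈ cellOf α β) (h : leNW p q) : leSW (f p) (f q) := by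
  have hrow := hmono p hp q hq h
  refine ⟨hrow, not_lt.1 fun hcol => ?_⟩
  have hfp := hf.1 hp
  have hfq := hf.1 hq
  have hc := neCorner_mem_cellOf hγ (one_le_fst_of_mem_cellOf hγ₀ hfp) hfp hfq ⟨hrow, hcol.le⟩
  obtain ⟨x, hx, hfx⟩ := hf.2.2 hc
  have hxp := hanti.1 _ _ _ hfp hc hcol
  have hqx := hanti.2 _ _ _ hc hfq hrow
  rw [← hfx, Prod.mk.eta, hTm x hx, hTm p hp] at hxp
  rw [← hfx, Prod.mk.eta, hTm x hx, hTm q hq] at hqx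
  exact absurd h.2 (not_le.2 (hqx.trans_lt hxp))

lemma leSW_of_leNW_image (hf : BijOn f (cellOf α β) (cellOf γ δ)) (hγ₀ : γ 0 = 0)
    (hδ : AntitoneOn δ (Ici 1)) (hfill : FillsRowsInReadingOrder α β f)
    (hstrict : ∀ p ∈ cellOf α β, ∀ q ∈ cellOf α β, p.1 < q.1 → p.2 ≤ q.2 → (f p).1 < (f q).1)
    (hTm : ∀ p ∈ cellOf α β, Tm (f p) = p.2) (hanti : IsAntiSSkew γ δ Tm)
    (hp : p ∈ cellOf α β) (hq : q ∈ cellOf α β) (h : leNW (f p) (f q)) : leSW p q := by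
  have hfp := hf.1 hp
  have hfq := hf.1 hq
  have hc := swCorner_mem_cellOf hδ (one_le_fst_of_mem_cellOf hγ₀ hfp) hfp hfq h
  obtain ⟨y, hy, hfy⟩ := hf.2.2 hc
  have hyp := hanti.2 _ _ _ hfp hc h.1
  have hqy : Tm ((f q).1, (f q).2) ≤ Tm ((f q).1, (f p).2) := by
    rcases h.2.lt_or_eq with hlt | heq
    · exact (hanti.1 _ _ _ hc hfq hlt).le
    · rw [heq]
  rw [← hfy, Prod.mk.eta, hTm y hy, hTm p hp] at hyp
  rw [← hfy, Prod.mk.eta, hTm y hy, hTm q hq] at hqy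
  have hyq : y.1 ≤ q.1 :=
    ((hfill.wle_iff hf.2.1 hy hq (by rw [hfy])).2 (by rw [hfy]; exact h.2)).fst_le
  have hpy : p.1 ≤ y.1 := not_lt.1 fun hlt =>
    absurd (hstrict y hy p hp hlt hyp) (by rw [hfy]; exact not_lt.2 h.1)
  exact ⟨hpy.trans hyq, hqy.trans hyp⟩

lemma isPicture_of_fillsRowsInReadingOrder (hf : BijOn f (cellOf α β) (cellOf γ δ))
    (hγ₀ : γ 0 = 0) (hγ : AntitoneOn γ (Ici 1)) (hδ : AntitoneOn δ (Ici 1))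
    (hfill : FillsRowsInReadingOrder α β f)
    (hmono : ∀ p ∈ cellOf α β, ∀ q ∈ cellOf α β, leNW p q → (f p).1 ≤ (f q).1)
    (hstrict : ∀ p ∈ cellOf α β, ∀ q ∈ cellOf α β, p.1 < q.1 → p.2 ≤ q.2 → (f p).1 < (f q).1)
    (hTm : ∀ p ∈ cellOf α β, Tm (f p) = p.2) (hanti : IsAntiSSkew γ δ Tm) :
    IsPicture α β γ δ f :=
  ⟨hf, fun _ hp _ hq => leSW_image_of_leNW hf hγ₀ hγ hmono hTm hanti hp hq,
    fun _ hp _ hq => leSW_of_leNW_image hf hγ₀ hδ hfill hstrict hTm hanti hp hq⟩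

end PicturesOfMarked

section Repositioning

variable {α β γ δ : ℕ → ℕ} {m : ℕ} {T Tm : ℕ × ℕ → ℕ} {p : ℕ × ℕ}

lemma rposFun_of_eq {i : ℕ} (h : T p = m + i) :
    RposFun α β m δ T p = (i, δ i + occBefore α β T (m + i) p) := by
  simp [RposFun, h]

lemma isRp_iff (hT : ∀ p ∈ cellOf α β, m + 1 ≤ T p) :
    IsRp α β m δ T Tm ↔ ∀ p ∈ cellOf α β, Tm (RposFun α β m δ T p) = p.2 := by
  refine ⟨fun h p hp => ?_, fun h x hx i _ hTx => ?_⟩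
  · have hTp : T p = m + (T p - m) := by have := hT p hp; omega
    rw [rposFun_of_eq hTp]
    exact h p hp _ (by have := hT p hp; omega) hTp
  · rw [← rposFun_of_eq hTx]
    exact h x hx

lemma rposFun_bijOn (hfin : (cellOf α β).Finite) (hT : ∀ p ∈ cellOf α β, m + 1 ≤ T p)
    (hcnt : ∀ i, 1 ≤ i → occCount α β T (m + i) = γ i - δ i) (hγ₀ : γ 0 = 0) :
    BijOn (RposFun α β m δ T) (cellOf α β) (cellOf γ δ) := by
  have hTeq (p : ℕ × ℕ) (hp : p ∈ cellOf α β) : T p = m + (T p - m) := by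
    have := hT p hp; omega
  refine ⟨fun p hp => ?_, fun p hp q hq hpq => ?_, fun y hy => ?_⟩
  · rw [rposFun_of_eq (hTeq p hp)]
    have h₁ := one_le_occBefore hfin hp (hTeq p hp)
    have h₂ := occBefore_le_occCount hfin (T := T) (v := m + (T p - m)) (x := p)
    rw [hcnt _ (by have := hT p hp; omega)] at h₂
    exact ⟨by dsimp only; omega, by dsimp only; omega⟩
  · rw [rposFun_of_eq (hTeq p hp), rposFun_of_eq (hTeq q hq), Prod.mk.injEq] at hpq
    obtain ⟨hrow, hocc⟩ := hpq
    have hTq : T q = m + (T p - m) := by rw [hrow]; exact hTeq q hq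
    rw [hrow, add_right_inj, ← hrow] at hocc
    by_contra hne
    rcases wle.total p q with h | h
    · exact (occBefore_lt hfin hq hTq h hne).ne hocc
    · exact (occBefore_lt hfin hp (hTeq p hp) h (Ne.symm hne)).ne' hocc
  · have hi := one_le_fst_of_mem_cellOf hγ₀ hy
    obtain ⟨x, hx, hTx, hocc⟩ := exists_occBefore_eq hfin (T := T) (v := m + y.1)
      (k := y.2 - δ y.1) (by have := hy.1; omega) (by rw [hcnt _ hi]; have := hy.2; omega)
    refine ⟨x, hx, ?_⟩
    rw [rposFun_of_eq hTx, hocc]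
    ext <;> simp only
    have := hy.1
    omega

lemma fillsRowsInReadingOrder_rposFun (hfin : (cellOf α β).Finite)
    (hT : ∀ p ∈ cellOf α β, m + 1 ≤ T p) :
    FillsRowsInReadingOrder α β (RposFun α β m δ T) := by
  intro p hp q hq hrow hpq
  simp only [RposFun] at hrow ⊢
  have hTpq : T p = T q := by have := hT p hp; have := hT q hq; omega
  rw [hTpq]
  exact Nat.add_le_add_left (occBefore_mono hfin hpq) _

lemma isPicture_rposFun (hfin : (cellOf α β).Finite) (hα₀ : α 0 = 0)
    (hβ : AntitoneOn β (Ici 1)) (hγ₀ : γ 0 = 0) (hγ : AntitoneOn γ (Ici 1))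
    (hδ : AntitoneOn δ (Ici 1)) (hT : ∀ p ∈ cellOf α β, m + 1 ≤ T p)
    (hcnt : ∀ i, 1 ≤ i → occCount α β T (m + i) = γ i - δ i) (hss : IsSSkew α β T)
    (hmarked : ∀ Tm, IsRp α β m δ T Tm → IsAntiSSkew γ δ Tm) :
    IsPicture α β γ δ (RposFun α β m δ T) := by
  set g := RposFun α β m δ T
  have hbij : BijOn g (cellOf α β) (cellOf γ δ) := rposFun_bijOn hfin hT hcnt hγ₀
  have hTg (p : ℕ × ℕ) (hp : p ∈ cellOf α β) : T p = m + (g p).1 := by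
    have := hT p hp; simp only [g, RposFun]; omega
  set Tm : ℕ × ℕ → ℕ := fun y => (Function.invFunOn g (cellOf α β) y).2
  have hTm (p : ℕ × ℕ) (hp : p ∈ cellOf α β) : Tm (g p) = p.2 := by
    simp only [Tm]
    rw [hbij.injOn.leftInvOn_invFunOn hp]
  refine isPicture_of_fillsRowsInReadingOrder hbij hγ₀ hγ hδ
    (fillsRowsInReadingOrder_rposFun hfin hT) (fun p hp q hq h => ?_)
    (fun p hp q hq h₁ h₂ => ?_) hTm (hmarked Tm ((isRp_iff hT).2 hTm))
  · have := hss.le_of_leNW hα₀ hβ hp hq h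
    rw [hTg p hp, hTg q hq] at this
    omega
  · have := hss.lt_of_fst_lt hα₀ hβ hp hq h₁ h₂
    rw [hTg p hp, hTg q hq] at this
    omega

end Repositioning

theorem statement17_general (m n : ℕ) (la μ ν : ℕ → ℕ)
    (hla : IsPartition la)
    (hμ : IsPartition μ)
    (hν : IsPartition ν)
    (hνn : ∀ i, n < i → ν i = lamMinus m la i) :
    (∀ f : ℕ × ℕ → ℕ × ℕ,
        IsPicture (conjP (lamPlus m la)) (conjP μ) ν (lamMinus m la) f →
          (∀ p ∈ cellOf (conjP (lamPlus m la)) (conjP μ),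
              m + 1 ≤ m + (f p).1 ∧ m + (f p).1 ≤ m + n) ∧
            (∀ i, 1 ≤ i →
              occCount (conjP (lamPlus m la)) (conjP μ) (fun q => m + (f q).1) (m + i) =
                ν i - lamMinus m la i) ∧
            IsSSkew (conjP (lamPlus m la)) (conjP μ) (fun q => m + (f q).1) ∧
            (∀ Tm : ℕ × ℕ → ℕ,
              IsRp (conjP (lamPlus m la)) (conjP μ) m (lamMinus m la)
                  (fun q => m + (f q).1) Tm →
                IsAntiSSkew ν (lamMinus m la) Tm) ∧
            ∀ p ∈ cellOf (conjP (lamPlus m la)) (conjP μ),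
              f p = RposFun (conjP (lamPlus m la)) (conjP μ) m (lamMinus m la)
                  (fun q => m + (f q).1) p) ∧
      ∀ Tp : ℕ × ℕ → ℕ,
        (∀ p ∈ cellOf (conjP (lamPlus m la)) (conjP μ), m + 1 ≤ Tp p ∧ Tp p ≤ m + n) →
        (∀ i, 1 ≤ i →
          occCount (conjP (lamPlus m la)) (conjP μ) Tp (m + i) = ν i - lamMinus m la i) →
        IsSSkew (conjP (lamPlus m la)) (conjP μ) Tp →
        (∀ Tm : ℕ × ℕ → ℕ,
          IsRp (conjP (lamPlus m la)) (conjP μ) m (lamMinus m la) Tp Tm →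
            IsAntiSSkew ν (lamMinus m la) Tm) →
        IsPicture (conjP (lamPlus m la)) (conjP μ) ν (lamMinus m la)
            (RposFun (conjP (lamPlus m la)) (conjP μ) m (lamMinus m la) Tp) ∧
          ∀ p ∈ cellOf (conjP (lamPlus m la)) (conjP μ),
            m + (RposFun (conjP (lamPlus m la)) (conjP μ) m (lamMinus m la) Tp p).1
              = Tp p := by
  have hA := (hla.lamPlus m).conjP
  have hrows (p : ℕ × ℕ) (hp : p ∈ cellOf ν (lamMinus m la)) : 1 ≤ p.1 ∧ p.1 ≤ n := by
    refine ⟨one_le_fst_of_mem_cellOf hν.1 hp, not_lt.1 fun hpn => ?_⟩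
    have := hp.1
    have := hp.2
    rw [hνn _ hpn] at this
    omega
  refine ⟨fun f hf => ?_, fun Tp hbd hcnt hss hmarked => ⟨?_, fun p hp => ?_⟩⟩
  · have hfill := hf.fillsRowsInReadingOrder
    have hbounds : ∀ p ∈ cellOf (conjP (lamPlus m la)) (conjP μ),
        m + 1 ≤ m + (f p).1 ∧ m + (f p).1 ≤ m + n := fun p hp => by
      have := hrows _ (hf.1.1 hp)
      omega
    refine ⟨hbounds, fun i _ => ?_, hf.isSSkew m, fun Tm hTm => hf.isAntiSSkew fun p hp => ?_,
      fun p hp => hfill.eq_rposFun hf.1 m hp⟩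
    · rw [occCount_const_add]
      exact occCount_fst hf.1 i
    · rw [hfill.eq_rposFun hf.1 m hp]
      exact (isRp_iff fun q hq => (hbounds q hq).1).1 hTm p hp
  · exact isPicture_rposFun (hA.finite_cellOf _) hA.1 hμ.conjP.antitoneOn hν.1 hν.antitoneOn
      (hla.lamMinus m).antitoneOn (fun p hp => (hbd p hp).1) hcnt hss hmarked
  · have := (hbd p hp).1
    simp only [RposFun]
    omega

/-- pictures `f : (λ⁺)′/μ′ → ν/ω` correspond bijectively to marked
tableaux `T⁺ ∈ M((λ⁺)′/μ′, ν/ω)`: the row reading (shifted by `m`) of a picture is a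
marked tableau whose repositioning map is the picture itself; conversely the
repositioning map of a marked tableau is a picture whose row reading recovers the
tableau. -/
theorem statement17 (m n : ℕ) (hm : 1 ≤ m) (hn : 1 ≤ n) (la μ ν : ℕ → ℕ)
    (hla : IsPartition la) (hook : la (m + 1) ≤ n)
    (hμ : IsPartition μ) (hμl : ∀ i, μ i ≤ lamPlus m la i)
    (hν : IsPartition ν) (hνω : ∀ i, lamMinus m la i ≤ ν i)
    (hνn : ∀ i, n < i → ν i = lamMinus m la i) :
    (∀ f : ℕ × ℕ → ℕ × ℕ,
        IsPicture (conjP (lamPlus m la)) (conjP μ) ν (lamMinus m la) f →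
          (∀ p ∈ cellOf (conjP (lamPlus m la)) (conjP μ),
              m + 1 ≤ m + (f p).1 ∧ m + (f p).1 ≤ m + n) ∧
            (∀ i, 1 ≤ i →
              occCount (conjP (lamPlus m la)) (conjP μ) (fun q => m + (f q).1) (m + i) =
                ν i - lamMinus m la i) ∧
            IsSSkew (conjP (lamPlus m la)) (conjP μ) (fun q => m + (f q).1) ∧
            (∀ Tm : ℕ × ℕ → ℕ,
              IsRp (conjP (lamPlus m la)) (conjP μ) m (lamMinus m la)
                  (fun q => m + (f q).1) Tm →
                IsAntiSSkew ν (lamMinus m la) Tm) ∧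
            ∀ p ∈ cellOf (conjP (lamPlus m la)) (conjP μ),
              f p = RposFun (conjP (lamPlus m la)) (conjP μ) m (lamMinus m la)
                  (fun q => m + (f q).1) p) ∧
      ∀ Tp : ℕ × ℕ → ℕ,
        (∀ p ∈ cellOf (conjP (lamPlus m la)) (conjP μ), m + 1 ≤ Tp p ∧ Tp p ≤ m + n) →
        (∀ i, 1 ≤ i →
          occCount (conjP (lamPlus m la)) (conjP μ) Tp (m + i) = ν i - lamMinus m la i) →
        IsSSkew (conjP (lamPlus m la)) (conjP μ) Tp →
        (∀ Tm : ℕ × ℕ → ℕ,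
          IsRp (conjP (lamPlus m la)) (conjP μ) m (lamMinus m la) Tp Tm →
            IsAntiSSkew ν (lamMinus m la) Tm) →
        IsPicture (conjP (lamPlus m la)) (conjP μ) ν (lamMinus m la)
            (RposFun (conjP (lamPlus m la)) (conjP μ) m (lamMinus m la) Tp) ∧
          ∀ p ∈ cellOf (conjP (lamPlus m la)) (conjP μ),
            m + (RposFun (conjP (lamPlus m la)) (conjP μ) m (lamMinus m la) Tp p).1
              = Tp p :=
  statement17_general m n la μ ν hla hμ hν hνn
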